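/- Let n ≥ 1 and δ > 0, and let u ∈ L^{1,1}(ℝⁿ). Define A(ξ) := ∫_{ℝⁿ} u(x)·(cos(ξ·x) − 1) dx and B(ξ) := ∫_{ℝⁿ} u(x)·sin(ξ·x) dx. Then there exists a constant C > 0, depending only on n and δ, such that for all t ≥ 0, ∫_{|ξ| ≤ δ} | (A(ξ) − i·B(ξ))·e^{−t|ξ|²} |² dξ ≤ C·‖u‖²_{1,1}·(1+t)^{−(n+2)/2}. -/

import Mathlib

open MeasureTheory Real Set

noncomputable section

namespace DampedPlate

variable {n : ℕ}

/-- `ℝⁿ` as a Euclidean space. -/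
abbrev Rn (n : ℕ) := EuclideanSpace ℝ (Fin n)

/-- The Fourier transform `f̂(ξ) = ∫ f(x) e^{-i ξ·x} dx` of a real-valued function. -/
def ftr (f : Rn n → ℝ) (ξ : Rn n) : ℂ :=
  ∫ x : Rn n, (f x : ℂ) * Complex.exp (-Complex.I * ((inner ℝ ξ x : ℝ) : ℂ))

/-- The multiplier `E₀(t,ξ)`. -/
def E0 (ζ t : ℝ) (ξ : Rn n) : ℝ :=
  if ζ < ‖ξ‖ then
    Real.exp (-t / (2 * (1 + ‖ξ‖ ^ 2))) *
      Real.cos (t * Real.sqrt (4 * ‖ξ‖ ^ 2 * (1 + ‖ξ‖ ^ 2) ^ 2 - 1) / (2 * (1 + ‖ξ‖ ^ 2)))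
  else
    Real.exp (-t / (2 * (1 + ‖ξ‖ ^ 2))) *
      Real.cosh (t * Real.sqrt (1 - 4 * ‖ξ‖ ^ 2 * (1 + ‖ξ‖ ^ 2) ^ 2) / (2 * (1 + ‖ξ‖ ^ 2)))

/-- The multiplier `E₁(t,ξ)`. -/
def E1 (ζ t : ℝ) (ξ : Rn n) : ℝ :=
  if ζ < ‖ξ‖ then
    Real.exp (-t / (2 * (1 + ‖ξ‖ ^ 2))) *
      (Real.sin (t * Real.sqrt (4 * ‖ξ‖ ^ 2 * (1 + ‖ξ‖ ^ 2) ^ 2 - 1) / (2 * (1 + ‖ξ‖ ^ 2))) /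
        (Real.sqrt (4 * ‖ξ‖ ^ 2 * (1 + ‖ξ‖ ^ 2) ^ 2 - 1) / (2 * (1 + ‖ξ‖ ^ 2))))
  else
    Real.exp (-t / (2 * (1 + ‖ξ‖ ^ 2))) *
      (Real.sinh (t * Real.sqrt (1 - 4 * ‖ξ‖ ^ 2 * (1 + ‖ξ‖ ^ 2) ^ 2) / (2 * (1 + ‖ξ‖ ^ 2))) /
        (Real.sqrt (1 - 4 * ‖ξ‖ ^ 2 * (1 + ‖ξ‖ ^ 2) ^ 2) / (2 * (1 + ‖ξ‖ ^ 2))))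

/-- The Fourier transform of the solution, expressed in terms of the Fourier transforms
`v₀ = û₀`, `v₁ = û₁` of the initial data:
`û(t,ξ) = û₀(ξ)E₀(t,ξ) + (û₁(ξ) + û₀(ξ)/(2(1+|ξ|²))) E₁(t,ξ)`. -/
def uhatC (ζ : ℝ) (v₀ v₁ : Rn n → ℂ) (t : ℝ) (ξ : Rn n) : ℂ :=
  v₀ ξ * ((E0 ζ t ξ : ℝ) : ℂ) +
    (v₁ ξ + v₀ ξ * (((1 : ℝ) / (2 * (1 + ‖ξ‖ ^ 2)) : ℝ) : ℂ)) * ((E1 ζ t ξ : ℝ) : ℂ)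

/-- The Fourier transform of the solution of the damped plate equation with data `u₀, u₁`. -/
def uhat (ζ : ℝ) (u₀ u₁ : Rn n → ℝ) (t : ℝ) (ξ : Rn n) : ℂ :=
  uhatC ζ (ftr u₀) (ftr u₁) t ξ

/-- The wave-like profile
`û₁(ξ) e^{-t/(2|ξ|²)} sin(t|ξ|)/|ξ| + û₀(ξ) e^{-t/(2|ξ|²)} cos(t|ξ|)`,
in terms of the Fourier transforms of the data. -/
def waveC (v₀ v₁ : Rn n → ℂ) (t : ℝ) (ξ : Rn n) : ℂ :=
  v₁ ξ * ((Real.exp (-t / (2 * ‖ξ‖ ^ 2)) * (Real.sin (t * ‖ξ‖) / ‖ξ‖) : ℝ) : ℂ) +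
    v₀ ξ * ((Real.exp (-t / (2 * ‖ξ‖ ^ 2)) * Real.cos (t * ‖ξ‖) : ℝ) : ℂ)

/-- The wave-like profile for real data `u₀, u₁`. -/
def wave (u₀ u₁ : Rn n → ℝ) (t : ℝ) (ξ : Rn n) : ℂ := waveC (ftr u₀) (ftr u₁) t ξ

/-- Membership in `H^l`, expressed on the Fourier side. -/
def MemHC (l : ℝ) (v : Rn n → ℂ) : Prop :=
  Integrable fun ξ : Rn n => (1 + ‖ξ‖ ^ 2) ^ l * ‖v ξ‖ ^ 2

/-- The `H^l` norm, expressed on the Fourier side. -/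
def HNormC (l : ℝ) (v : Rn n → ℂ) : ℝ :=
  (∫ ξ : Rn n, (1 + ‖ξ‖ ^ 2) ^ l * ‖v ξ‖ ^ 2) ^ ((1 : ℝ) / 2)

/-- `f ∈ H^l(ℝⁿ)`. -/
def MemH (l : ℝ) (f : Rn n → ℝ) : Prop := MemHC l (ftr f)

/-- `‖f‖_{H^l}`. -/
def HNorm (l : ℝ) (f : Rn n → ℝ) : ℝ := HNormC l (ftr f)

/-- `‖f‖_{1,1} = ∫ (1+|x|)|f(x)| dx`. -/
def Norm11 (f : Rn n → ℝ) : ℝ := ∫ x : Rn n, (1 + ‖x‖) * |f x|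

/-- `f ∈ L^{1,1}(ℝⁿ)`. -/
def MemL11 (f : Rn n → ℝ) : Prop :=
  Integrable f ∧ Integrable fun x : Rn n => (1 + ‖x‖) * |f x|

/-- `P_j = ∫ u_j(x) dx`. -/
def Pint (f : Rn n → ℝ) : ℝ := ∫ x : Rn n, f x

/-- `I₀ = ‖u₁‖_{H^l} + ‖u₀‖_{H^{l+1}} + ‖u₁‖_{1,1} + ‖u₀‖_{1,1}`. -/
def I0 (l : ℝ) (u₀ u₁ : Rn n → ℝ) : ℝ :=
  HNorm l u₁ + HNorm (l + 1) u₀ + Norm11 u₁ + Norm11 u₀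

/-- The heat-like profile `(P₁ + P₀) e^{-t|ξ|²}`. -/
def heat (u₀ u₁ : Rn n → ℝ) (t : ℝ) (ξ : Rn n) : ℂ :=
  (((Pint u₁ + Pint u₀) * Real.exp (-t * ‖ξ‖ ^ 2) : ℝ) : ℂ)

/-- `ζ` is the unique number in `(0,1)` with `4ζ²(1+ζ²)² = 1`. -/
def zetaCond (ζ : ℝ) : Prop := 0 < ζ ∧ ζ < 1 ∧ 4 * ζ ^ 2 * (1 + ζ ^ 2) ^ 2 = 1

end DampedPlate

open DampedPlate

/-!
Since `|cos s - 1| ≤ |s|` and `|sin s| ≤ |s|`, both `A(ξ)` and `B(ξ)` are bounded by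
`|ξ| ‖u‖_{1,1}`. On the ball `|ξ| ≤ δ` the factor `|ξ|²` is traded for a power of `1 + t`:
`|ξ|² e^{-2t|ξ|²} ≤ e^{2δ²} (1 + t)⁻¹ e^{-(1+t)|ξ|²}`, and the Gaussian integral
`∫ e^{-(1+t)|ξ|²} dξ = (π / (1 + t))^{n/2}` supplies the remaining decay.
-/

lemma abs_integral_mul_comp_inner_le {E : Type*} [NormedAddCommGroup E] [InnerProductSpace ℝ E]
    [MeasurableSpace E] {μ : Measure E} {f : ℝ → ℝ} (hf : ∀ y, |f y| ≤ |y|) {u : E → ℝ}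
    (hu : Integrable (fun x => (1 + ‖x‖) * |u x|) μ) (ξ : E) :
    |∫ x, u x * f (inner ℝ ξ x) ∂μ| ≤ ‖ξ‖ * ∫ x, (1 + ‖x‖) * |u x| ∂μ := by
  rw [← Real.norm_eq_abs, ← integral_const_mul]
  refine norm_integral_le_of_norm_le (hu.const_mul _) (Filter.Eventually.of_forall fun x => ?_)
  calc ‖u x * f (inner ℝ ξ x)‖ = |u x| * |f (inner ℝ ξ x)| := by
        rw [Real.norm_eq_abs, abs_mul]
    _ ≤ |u x| * (‖ξ‖ * ‖x‖) :=
        mul_le_mul_of_nonneg_left ((hf _).trans (abs_real_inner_le_norm ξ x)) (abs_nonneg _)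
    _ ≤ ‖ξ‖ * ((1 + ‖x‖) * |u x|) := by nlinarith [abs_nonneg (u x), norm_nonneg ξ]

lemma abs_cos_sub_one_le (y : ℝ) : |Real.cos y - 1| ≤ |y| := by
  simpa using Real.abs_cos_sub_cos_le y 0

lemma norm_ofReal_sub_I_mul_ofReal_sq (a b : ℝ) : ‖(a : ℂ) - Complex.I * b‖ ^ 2 = a ^ 2 + b ^ 2 := by
  rw [Complex.sq_norm, Complex.normSq_apply]
  simp [sq]

lemma mul_exp_neg_two_mul_le {x a t : ℝ} (hxa : x ≤ a) (ht : 0 ≤ t) :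
    x * Real.exp (-(2 * t) * x) ≤ Real.exp (2 * a) / (1 + t) * Real.exp (-(1 + t) * x) := by
  have h1t : 0 < 1 + t := by linarith
  rw [div_mul_eq_mul_div, le_div_iff₀ h1t]
  calc x * Real.exp (-(2 * t) * x) * (1 + t)
      = (1 + t) * x * Real.exp (-(2 * t) * x) := by ring
    _ ≤ Real.exp ((1 + t) * x) * Real.exp (-(2 * t) * x) := by
        gcongr
        linarith [Real.add_one_le_exp ((1 + t) * x)]
    _ = Real.exp (2 * x) * Real.exp (-(1 + t) * x) := by
        rw [← Real.exp_add, ← Real.exp_add]; ring_nf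
    _ ≤ Real.exp (2 * a) * Real.exp (-(1 + t) * x) := by gcongr

section Gaussian

variable {V : Type*} [NormedAddCommGroup V] [InnerProductSpace ℝ V] [FiniteDimensional ℝ V]
  [MeasurableSpace V] [BorelSpace V]

lemma integrable_exp_neg_mul_sq_norm {b : ℝ} (hb : 0 < b) :
    Integrable fun v : V => Real.exp (-b * ‖v‖ ^ 2) := by
  refine Integrable.of_integral_ne_zero ?_
  rw [GaussianFourier.integral_rexp_neg_mul_sq_norm hb]
  positivity

lemma setIntegral_exp_neg_mul_sq_norm_le (s : Set V) {b : ℝ} (hb : 0 < b) :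
    ∫ v in s, Real.exp (-b * ‖v‖ ^ 2) ≤ (π / b) ^ (Module.finrank ℝ V / 2 : ℝ) := by
  rw [← GaussianFourier.integral_rexp_neg_mul_sq_norm hb]
  exact setIntegral_le_integral (integrable_exp_neg_mul_sq_norm hb)
    (Filter.Eventually.of_forall fun v => (Real.exp_pos _).le)

end Gaussian

section CosSinIntegrals

variable {E : Type*} [NormedAddCommGroup E] [InnerProductSpace ℝ E] [MeasurableSpace E]
  {μ : Measure E} {u : E → ℝ}

lemma norm_sq_cos_sin_integral_le (hu : Integrable (fun x => (1 + ‖x‖) * |u x|) μ) (ξ : E) :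
    ‖((∫ x, u x * (Real.cos (inner ℝ ξ x) - 1) ∂μ : ℝ) : ℂ) -
        Complex.I * ((∫ x, u x * Real.sin (inner ℝ ξ x) ∂μ : ℝ) : ℂ)‖ ^ 2 ≤
      2 * (‖ξ‖ * ∫ x, (1 + ‖x‖) * |u x| ∂μ) ^ 2 := by
  rw [norm_ofReal_sub_I_mul_ofReal_sq, two_mul, ← sq_abs, ← sq_abs (∫ x, _ ∂μ)]
  have hN : 0 ≤ ‖ξ‖ * ∫ x, (1 + ‖x‖) * |u x| ∂μ :=
    mul_nonneg (norm_nonneg ξ) (integral_nonneg fun x => by positivity)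
  gcongr
  · exact abs_integral_mul_comp_inner_le abs_cos_sub_one_le hu ξ
  · exact abs_integral_mul_comp_inner_le (fun _ => Real.abs_sin_le_abs) hu ξ

lemma norm_sq_cos_sin_integral_mul_exp_le (hu : Integrable (fun x => (1 + ‖x‖) * |u x|) μ)
    {t δ : ℝ} (ht : 0 ≤ t) {ξ : E} (hξ : ‖ξ‖ ≤ δ) :
    ‖(((∫ x, u x * (Real.cos (inner ℝ ξ x) - 1) ∂μ : ℝ) : ℂ) -
        Complex.I * ((∫ x, u x * Real.sin (inner ℝ ξ x) ∂μ : ℝ) : ℂ)) *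
      ((Real.exp (-t * ‖ξ‖ ^ 2) : ℝ) : ℂ)‖ ^ 2 ≤
      2 * (∫ x, (1 + ‖x‖) * |u x| ∂μ) ^ 2 * (Real.exp (2 * δ ^ 2) / (1 + t)) *
        Real.exp (-(1 + t) * ‖ξ‖ ^ 2) := by
  have hsq : ‖((Real.exp (-t * ‖ξ‖ ^ 2) : ℝ) : ℂ)‖ ^ 2 = Real.exp (-(2 * t) * ‖ξ‖ ^ 2) := by
    rw [Complex.norm_real, Real.norm_of_nonneg (Real.exp_pos _).le, ← Real.exp_nat_mul]
    ring_nf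
  rw [norm_mul, mul_pow, hsq, mul_assoc _ (_ / _)]
  calc _ ≤ 2 * (‖ξ‖ * ∫ x, (1 + ‖x‖) * |u x| ∂μ) ^ 2 * Real.exp (-(2 * t) * ‖ξ‖ ^ 2) := by
        gcongr
        exact norm_sq_cos_sin_integral_le hu ξ
    _ = 2 * (∫ x, (1 + ‖x‖) * |u x| ∂μ) ^ 2 * (‖ξ‖ ^ 2 * Real.exp (-(2 * t) * ‖ξ‖ ^ 2)) := by
        ring
    _ ≤ _ := mul_le_mul_of_nonneg_left
        (mul_exp_neg_two_mul_le (pow_le_pow_left₀ (norm_nonneg ξ) hξ 2) ht) (by positivity)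

end CosSinIntegrals

theorem stmt_17_general (n : ℕ) (δ : ℝ) :
    ∃ C > (0 : ℝ), ∀ u : Rn n → ℝ, MemL11 u →
      ∀ t : ℝ, 0 ≤ t →
        (∫ ξ in {ξ : Rn n | ‖ξ‖ ≤ δ},
            ‖(((∫ x : Rn n, u x * (Real.cos ((inner ℝ ξ x : ℝ)) - 1) : ℝ) : ℂ) -
                Complex.I * ((∫ x : Rn n, u x * Real.sin ((inner ℝ ξ x : ℝ)) : ℝ) : ℂ)) *
              ((Real.exp (-t * ‖ξ‖ ^ 2) : ℝ) : ℂ)‖ ^ 2) ≤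
          C * Norm11 u ^ 2 * (1 + t) ^ (-(((n : ℝ) + 2) / 2)) := by
  refine ⟨2 * Real.exp (2 * δ ^ 2) * π ^ ((n : ℝ) / 2), by positivity, fun u hu t ht => ?_⟩
  have h1t : 0 < 1 + t := by linarith
  set c := 2 * Norm11 u ^ 2 * (Real.exp (2 * δ ^ 2) / (1 + t))
  calc _ ≤ ∫ ξ in {ξ : Rn n | ‖ξ‖ ≤ δ}, c * Real.exp (-(1 + t) * ‖ξ‖ ^ 2) :=
        integral_mono_of_nonneg (Filter.Eventually.of_forall fun ξ => by positivity)
          ((integrable_exp_neg_mul_sq_norm h1t).integrableOn.const_mul c)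
          (ae_restrict_of_forall_mem (measurableSet_le measurable_norm measurable_const)
            fun ξ hξ => norm_sq_cos_sin_integral_mul_exp_le hu.2 ht hξ)
    _ = c * ∫ ξ in {ξ : Rn n | ‖ξ‖ ≤ δ}, Real.exp (-(1 + t) * ‖ξ‖ ^ 2) := integral_const_mul _ _
    _ ≤ c * (π / (1 + t)) ^ ((n : ℝ) / 2) := by
        gcongr
        simpa using setIntegral_exp_neg_mul_sq_norm_le {ξ : Rn n | ‖ξ‖ ≤ δ} h1t
    _ = _ := by
        rw [show -(((n : ℝ) + 2) / 2) = -1 + -((n : ℝ) / 2) by ring, Real.rpow_add h1t,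
          Real.rpow_neg_one, Real.rpow_neg h1t.le, Real.div_rpow pi_pos.le h1t.le]
        ring

/-- Low-frequency estimate for the term `(A - iB) e^{-t|ξ|²}`, where
`A(ξ) = ∫ u(x)(cos(ξ·x) - 1) dx` and `B(ξ) = ∫ u(x) sin(ξ·x) dx`. -/
theorem stmt_17 (n : ℕ) (hn : 1 ≤ n) (δ : ℝ) (hδ : 0 < δ) :
    ∃ C > (0 : ℝ), ∀ u : Rn n → ℝ, MemL11 u →
      ∀ t : ℝ, 0 ≤ t →
        (∫ ξ in {ξ : Rn n | ‖ξ‖ ≤ δ},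
            ‖(((∫ x : Rn n, u x * (Real.cos ((inner ℝ ξ x : ℝ)) - 1) : ℝ) : ℂ) -
                Complex.I * ((∫ x : Rn n, u x * Real.sin ((inner ℝ ξ x : ℝ)) : ℝ) : ℂ)) *
              ((Real.exp (-t * ‖ξ‖ ^ 2) : ℝ) : ℂ)‖ ^ 2) ≤
          C * Norm11 u ^ 2 * (1 + t) ^ (-(((n : ℝ) + 2) / 2)) :=
  stmt_17_general n δ
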